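/- Non-robustness of the standard GP posterior: let μ(y) = m + K(K + σ²I)⁻¹(y − m) and Σ = K(K + σ²I)⁻¹σ²I with K symmetric positive definite and σ² > 0. If y and yᶜ differ only in the m-th coordinate, then ½(μ(yᶜ) − μ(y))ᵀ Σ⁻¹ (μ(yᶜ) − μ(y)) = C · (y_m − yᶜ_m)² where C = ½ [(K + σ²I)⁻¹ K σ⁻²]_{mm} > 0; hence this quantity tends to infinity as |yᶜ_m| → ∞. -/

import Mathlib

/-!
Write `P = K (K + σ²I)⁻¹`. The posterior mean moves by `P (yᶜ - y) = (yᶜₘ - yₘ) P eₘ` and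
`Σ = σ² P`, so `Σ⁻¹` undoes `P` and the quadratic form collapses to `σ⁻² Pₘₘ (yₘ - yᶜₘ)²`.
Since `P = (I + σ² K⁻¹)⁻¹` is positive definite, `Pₘₘ > 0`, and the constant is the same as
`C` because `K` commutes with `(K + σ²I)⁻¹`.
-/

open Matrix Filter

theorem sub_eq_pi_single_of_forall_ne {ι α : Type*} [DecidableEq ι] [AddGroup α]
    {y y' : ι → α} {i : ι} (h : ∀ j, j ≠ i → y j = y' j) :
    y' - y = Pi.single i (y' i - y i) := by
  funext j
  by_cases hj : j = i
  · subst hj; simp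
  · simp [hj, h j hj]

theorem tendsto_const_mul_sub_sq_cocompact {C : ℝ} (hC : 0 < C) (a : ℝ) :
    Tendsto (fun t : ℝ => C * (a - t) ^ 2) (cocompact ℝ) atTop := by
  have hdist : Tendsto (fun t : ℝ => ‖a - t‖) (cocompact ℝ) atTop :=
    tendsto_norm_cocompact_atTop.comp (Homeomorph.subLeft a).map_cocompact.le
  simpa only [Real.norm_eq_abs, sq_abs, Function.comp_def] using
    ((tendsto_pow_atTop two_ne_zero).comp hdist).const_mul_atTop hC

namespace Matrix

variable {ι 𝕜 : Type*} [Fintype ι] [DecidableEq ι]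

section Field

variable [Field 𝕜]

theorem commute_add_smul_one (K : Matrix ι ι 𝕜) (σ : 𝕜) : Commute K (K + σ • 1) :=
  (Commute.refl K).add_right ((Commute.one_right K).smul_right σ)

theorem commute_nonsing_inv_right {A B : Matrix ι ι 𝕜} (h : Commute A B) : Commute A B⁻¹ := by
  by_cases hB : IsUnit B.det
  · have := invertibleOfIsUnitDet B hB
    rw [← invOf_eq_nonsing_inv]
    exact h.invOf_right
  · rw [nonsing_inv_apply_not_isUnit B hB]
    exact Commute.zero_right A

theorem smul_inv_mulVec_mulVec {P : Matrix ι ι 𝕜} (hP : IsUnit P) {s : 𝕜} (hs : s ≠ 0)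
    (v : ι → 𝕜) : (s • P)⁻¹ *ᵥ (P *ᵥ v) = s⁻¹ • v := by
  have hdet := (isUnit_iff_isUnit_det P).1 hP
  have := invertibleOfNonzero hs
  rw [inv_smul P s hdet, invOf_eq_inv, smul_mulVec, mulVec_mulVec, nonsing_inv_mul _ hdet,
    one_mulVec]

theorem mulVec_single_dotProduct_smul_inv_mulVec {P : Matrix ι ι 𝕜} (hP : IsUnit P) {s : 𝕜}
    (hs : s ≠ 0) (i : ι) (c : 𝕜) :
    (P *ᵥ Pi.single i c) ⬝ᵥ (s • P)⁻¹ *ᵥ (P *ᵥ Pi.single i c) = s⁻¹ * P i i * c ^ 2 := by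
  rw [smul_inv_mulVec_mulVec hP hs, dotProduct_smul, dotProduct_single]
  simp only [mulVec_single, Pi.smul_apply, col_apply, MulOpposite.smul_eq_mul_unop,
    MulOpposite.unop_op, smul_eq_mul]
  ring

end Field

theorem PosDef.mul_inv_add_smul_one [Field 𝕜] [PartialOrder 𝕜] [StarRing 𝕜] [StarOrderedRing 𝕜]
    [PosMulStrictMono 𝕜] {K : Matrix ι ι 𝕜} (hK : K.PosDef) {σ : 𝕜} (hσ : 0 < σ) :
    (K * (K + σ • 1)⁻¹).PosDef := by
  have hKu := (isUnit_iff_isUnit_det K).1 hK.isUnit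
  have h : 1 + σ • K⁻¹ = (K + σ • 1) * K⁻¹ := by
    rw [add_mul, mul_nonsing_inv _ hKu, smul_mul, one_mul, add_comm]
  have h' : K * (K + σ • 1)⁻¹ = (1 + σ • K⁻¹)⁻¹ := by
    rw [h, mul_inv_rev, nonsing_inv_nonsing_inv _ hKu]
  rw [h']
  exact (PosDef.one.add (hK.inv.smul hσ)).inv

end Matrix

theorem gp_not_robust (n : ℕ) (K : Matrix (Fin n) (Fin n) ℝ) (hK : K.PosDef)
    (σ2 : ℝ) (hσ : 0 < σ2) (m : Fin n) (mean : Fin n → ℝ) (y yc : Fin n → ℝ)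
    (hagree : ∀ i, i ≠ m → y i = yc i)
    (μ : (Fin n → ℝ) → (Fin n → ℝ))
    (hμ : ∀ v, μ v = mean + (K * (K + σ2 • (1 : Matrix (Fin n) (Fin n) ℝ))⁻¹).mulVec (v - mean))
    (S : Matrix (Fin n) (Fin n) ℝ)
    (hS : S = K * (K + σ2 • (1 : Matrix (Fin n) (Fin n) ℝ))⁻¹ * (σ2 • (1 : Matrix (Fin n) (Fin n) ℝ)))
    (C : ℝ)
    (hC : C = (1/2) * (((K + σ2 • (1 : Matrix (Fin n) (Fin n) ℝ))⁻¹ * K * (σ2⁻¹ • (1 : Matrix (Fin n) (Fin n) ℝ))) m m)) :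
    (1/2) * ((μ yc - μ y) ⬝ᵥ S⁻¹.mulVec (μ yc - μ y)) = C * (y m - yc m) ^ 2
    ∧ 0 < C
    ∧ Tendsto (fun t : ℝ => C * (y m - t) ^ 2) (cocompact ℝ) atTop := by
  set P := K * (K + σ2 • (1 : Matrix (Fin n) (Fin n) ℝ))⁻¹
  have hP : P.PosDef := hK.mul_inv_add_smul_one hσ
  have hSP : S = σ2 • P := by rw [hS, Matrix.mul_smul, mul_one]
  have hCP : C = (1/2) * (σ2⁻¹ * P m m) := by
    rw [hC, Matrix.mul_smul, mul_one, ← (commute_nonsing_inv_right (commute_add_smul_one K σ2)).eq,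
      Matrix.smul_apply, smul_eq_mul]
  have hdiff : μ yc - μ y = P *ᵥ Pi.single m (yc m - y m) := by
    rw [hμ, hμ, add_sub_add_left_eq_sub, ← mulVec_sub, sub_sub_sub_cancel_right,
      sub_eq_pi_single_of_forall_ne hagree]
  have hCpos : 0 < C := by
    have := hP.diag_pos (i := m)
    rw [hCP]
    positivity
  refine ⟨?_, hCpos, tendsto_const_mul_sub_sq_cocompact hCpos _⟩
  rw [hdiff, hSP, mulVec_single_dotProduct_smul_inv_mulVec hP.isUnit hσ.ne', hCP]
  ring
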